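/- arXiv:0912.4185 — 2 statements merged into one kernel-verified Lean document; each statement's English description precedes it below -/
import Mathlib

section
/- Fix m₀ ∈ ℕ and θ > 0, and define the diagonal double sequence â_{pq} = δ_{pq}·√(θ/2)·∑_{k=p}^{m₀} 1/√(k+1) (with â_{pq} = 0 for p > m₀). Define α̂ by the derivative recursion α̂_{p+1,q} = √((q+1)/θ)·â_{p+1,q+1} − √((p+1)/θ)·â_{p,q} and α̂_{0,q} = √((q+1)/θ)·â_{0,q+1}. Then the only non-vanishing coefficients are α̂_{p+1,p} = −1/√2 for 0 ≤ p ≤ m₀, and all other α̂_{pq} vanish. -/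
open Real Finset

theorem optimal_element_derivative_coefficients (θ : ℝ) (hθ : 0 < θ) (m₀ : ℕ)
    (ahat αhat : ℕ → ℕ → ℝ)
    (ha : ∀ p q : ℕ, ahat p q =
      if p = q then Real.sqrt (θ / 2) * ∑ k ∈ Finset.Icc p m₀, 1 / Real.sqrt ((k : ℝ) + 1)
      else 0)
    (hα1 : ∀ p q : ℕ, αhat (p + 1) q =
      Real.sqrt (((q : ℝ) + 1) / θ) * ahat (p + 1) (q + 1) -
      Real.sqrt (((p : ℝ) + 1) / θ) * ahat p q)
    (hα0 : ∀ q : ℕ, αhat 0 q = Real.sqrt (((q : ℝ) + 1) / θ) * ahat 0 (q + 1)) :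
    (∀ p : ℕ, p ≤ m₀ → αhat (p + 1) p = -(1 / Real.sqrt 2)) ∧
    (∀ p q : ℕ, ¬(q + 1 = p ∧ p ≤ m₀ + 1) → αhat p q = 0) := by
  constructor
  · intro p hp
    have hp1 : (0:ℝ) < (p:ℝ) + 1 := by positivity
    rw [hα1, ha, ha]
    simp only [eq_self_iff_true, if_true]
    have hIcc : Finset.Icc p m₀ = insert p (Finset.Icc (p+1) m₀) := by
      ext x; simp only [Finset.mem_Icc, Finset.mem_insert]; omega
    rw [hIcc, Finset.sum_insert (by simp)]
    have hmul : ((p:ℝ)+1)/θ * (θ/2) = ((p:ℝ)+1)/2 := by field_simp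
    have key : Real.sqrt (((p:ℝ)+1)/θ) * Real.sqrt (θ/2) * (1 / Real.sqrt ((p:ℝ)+1))
        = 1 / Real.sqrt 2 := by
      rw [← Real.sqrt_mul (by positivity), hmul,
        Real.sqrt_div (le_of_lt hp1)]
      have h2 : Real.sqrt ((p:ℝ)+1) ≠ 0 := by positivity
      field_simp
    linear_combination -key
  · intro p q h
    match p with
    | 0 =>
      rw [hα0, ha, if_neg (by omega), mul_zero]
    | p+1 =>
      rw [hα1, ha, ha]
      by_cases hpq : p = q
      · subst hpq
        have e1 : Finset.Icc (p+1) m₀ = ∅ := by rw [Finset.Icc_eq_empty_iff]; omega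
        have e2 : Finset.Icc p m₀ = ∅ := by rw [Finset.Icc_eq_empty_iff]; omega
        simp [e1, e2]
      · rw [if_neg (by omega), if_neg hpq]
        ring
end

section
/- Let Λ = ∑_{m∈I} λ_m f_{m0} be a unit vector with I ⊂ ℕ finite, and let a be a double sequence whose derivative coefficients α, β (defined from a by the matrix-base recursions) satisfy |α_{pq}| ≤ 1/√2 and |β_{pq}| ≤ 1/√2 for all p,q. Then there is a constant C = C(I, n, θ), independent of a, such that |2πθ·∑_{p,q∈I} a_{pq} λ_p* λ_q − a_{nn}| ≤ C for every n ∈ ℕ. Consequently d(ω_Λ, ω_n) < +∞. -/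
/-!
Put `b p q = a p q - δ_{pq} a₀₀`. The defining recursions of `α` and `β` hold for `b` as well
(the `δ`-terms cancel on the diagonal), and reading them along `p ≤ q` via `α` and along `q ≤ p`
via `β` gives `‖b (p+1) (q+1)‖ ≤ √θ + ‖b p q‖`, hence `‖b p q‖ ≤ √θ (min p q + 1)`.
Since the state is normalized, `a₀₀` drops out of `ω_Λ(a) - ω_n(a)`, which is therefore a finite
combination of the `b p q`, bounded independently of `a`.
-/

open Real Complex Finset

lemma norm_le_sqrt_add_of_sqrt_mul_eq {θ x y : ℝ} (hθ : 0 < θ) (hxy : x ≤ y) (hy : 1 ≤ y)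
    {z w u : ℂ} (hw : ‖w‖ ≤ 1) (h : (√(y / θ) : ℂ) * z = w + (√(x / θ) : ℂ) * u) :
    ‖z‖ ≤ √θ + ‖u‖ := by
  have hsx : √(x / θ) ≤ √(y / θ) := Real.sqrt_le_sqrt (div_le_div_of_nonneg_right hxy hθ.le)
  have hsy : 0 < √(y / θ) := Real.sqrt_pos.2 (div_pos (by linarith) hθ)
  have hinv : (√(y / θ))⁻¹ ≤ √θ := by
    rw [← Real.sqrt_inv, inv_div, Real.sqrt_le_sqrt_iff hθ.le]
    exact div_le_self hθ.le hy
  have hnorm : √(y / θ) * ‖z‖ ≤ 1 + √(y / θ) * ‖u‖ := calc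
    √(y / θ) * ‖z‖ = ‖w + (√(x / θ) : ℂ) * u‖ := by
      rw [← h, norm_mul, Complex.norm_real, Real.norm_of_nonneg hsy.le]
    _ ≤ 1 + √(x / θ) * ‖u‖ := by
      refine (norm_add_le _ _).trans (add_le_add hw (le_of_eq ?_))
      rw [norm_mul, Complex.norm_real, Real.norm_of_nonneg (Real.sqrt_nonneg _)]
    _ ≤ 1 + √(y / θ) * ‖u‖ := by gcongr
  calc ‖z‖ ≤ (√(y / θ))⁻¹ * 1 + ‖u‖ := by
        rw [← sub_le_iff_le_add, ← mul_le_mul_iff_of_pos_left hsy, mul_sub,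
          ← mul_assoc, mul_inv_cancel₀ hsy.ne', one_mul]
        linarith
    _ ≤ √θ + ‖u‖ := by rw [mul_one]; gcongr

section DiagonalShift

variable {θ : ℝ} {a α β : ℕ → ℕ → ℂ}

lemma sqrt_mul_sub_diag_succ_of_alpha
    (hα : ∀ p q : ℕ, α (p + 1) q =
      (√(((q : ℝ) + 1) / θ) : ℂ) * a (p + 1) (q + 1) - (√(((p : ℝ) + 1) / θ) : ℂ) * a p q)
    (p q : ℕ) :
    (√(((q : ℝ) + 1) / θ) : ℂ) * (a (p + 1) (q + 1) - if p + 1 = q + 1 then a 0 0 else 0) =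
      α (p + 1) q + (√(((p : ℝ) + 1) / θ) : ℂ) * (a p q - if p = q then a 0 0 else 0) := by
  rw [hα]
  by_cases hpq : p = q
  · subst hpq; simp only [if_true]; ring
  · simp only [hpq, Nat.succ_inj, if_false]; ring

lemma sqrt_mul_sub_diag_succ_of_beta
    (hβ : ∀ p q : ℕ, β p (q + 1) =
      (√(((p : ℝ) + 1) / θ) : ℂ) * a (p + 1) (q + 1) - (√(((q : ℝ) + 1) / θ) : ℂ) * a p q)
    (p q : ℕ) :
    (√(((p : ℝ) + 1) / θ) : ℂ) * (a (p + 1) (q + 1) - if p + 1 = q + 1 then a 0 0 else 0) =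
      β p (q + 1) + (√(((q : ℝ) + 1) / θ) : ℂ) * (a p q - if p = q then a 0 0 else 0) := by
  rw [hβ]
  by_cases hpq : p = q
  · subst hpq; simp only [if_true]; ring
  · simp only [hpq, Nat.succ_inj, if_false]; ring

theorem norm_sub_diag_le_of_derivatives (hθ : 0 < θ)
    (hα : ∀ p q : ℕ, α (p + 1) q =
      (√(((q : ℝ) + 1) / θ) : ℂ) * a (p + 1) (q + 1) - (√(((p : ℝ) + 1) / θ) : ℂ) * a p q)
    (hα0 : ∀ q : ℕ, α 0 q = (√(((q : ℝ) + 1) / θ) : ℂ) * a 0 (q + 1))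
    (hβ : ∀ p q : ℕ, β p (q + 1) =
      (√(((p : ℝ) + 1) / θ) : ℂ) * a (p + 1) (q + 1) - (√(((q : ℝ) + 1) / θ) : ℂ) * a p q)
    (hβ0 : ∀ p : ℕ, β p 0 = (√(((p : ℝ) + 1) / θ) : ℂ) * a (p + 1) 0)
    (hαb : ∀ p q : ℕ, ‖α p q‖ ≤ 1) (hβb : ∀ p q : ℕ, ‖β p q‖ ≤ 1) (p q : ℕ) :
    ‖a p q - if p = q then a 0 0 else 0‖ ≤ √θ * ((min p q : ℕ) + 1) := by
  have hsucc : ∀ k : ℕ, (1 : ℝ) ≤ (k : ℝ) + 1 := fun k => by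
    linarith [(Nat.cast_nonneg k : (0 : ℝ) ≤ k)]
  induction p generalizing q with
  | zero =>
    cases q with
    | zero => simp
    | succ q =>
      have h := norm_le_sqrt_add_of_sqrt_mul_eq (x := 0) (z := a 0 (q + 1)) (u := 0) hθ
        (by positivity) (hsucc q) (hαb 0 q) (by simp [hα0])
      simpa using h
  | succ p ih =>
    cases q with
    | zero =>
      have h := norm_le_sqrt_add_of_sqrt_mul_eq (x := 0) (z := a (p + 1) 0) (u := 0) hθ
        (by positivity) (hsucc p) (hβb p 0) (by simp [hβ0])
      simpa using h
    | succ q =>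
      have hstep : ‖a (p + 1) (q + 1) - if p + 1 = q + 1 then a 0 0 else 0‖ ≤
          √θ + ‖a p q - if p = q then a 0 0 else 0‖ := by
        rcases le_total p q with hpq | hqp
        · exact norm_le_sqrt_add_of_sqrt_mul_eq hθ (by gcongr) (hsucc q) (hαb (p + 1) q)
            (sqrt_mul_sub_diag_succ_of_alpha hα p q)
        · exact norm_le_sqrt_add_of_sqrt_mul_eq hθ (by gcongr) (hsucc p) (hβb p (q + 1))
            (sqrt_mul_sub_diag_succ_of_beta hβ p q)
      have hmin : ((min (p + 1) (q + 1) : ℕ) : ℝ) = (min p q : ℕ) + 1 := by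
        rw [Nat.succ_min_succ]; push_cast; ring
      rw [hmin]
      linarith [ih q]

end DiagonalShift

lemma sum_conj_mul_ite_eq (I : Finset ℕ) (lam : ℕ → ℂ) (c : ℂ) :
    ∑ p ∈ I, ∑ q ∈ I, starRingEnd ℂ (lam p) * lam q * (if p = q then c else 0) =
      ((∑ p ∈ I, ‖lam p‖ ^ 2 : ℝ) : ℂ) * c := by
  push_cast
  rw [Finset.sum_mul]
  refine Finset.sum_congr rfl fun p hp => ?_
  rw [Finset.sum_eq_single_of_mem p hp fun q _ hqp => by rw [if_neg (Ne.symm hqp), mul_zero],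
    if_pos rfl, ← Complex.mul_conj', mul_comm (lam p)]

theorem norm_vectorState_sub_le {r : ℝ} (hr : 0 ≤ r) {I : Finset ℕ} {lam : ℕ → ℂ}
    (hunit : r * ∑ m ∈ I, ‖lam m‖ ^ 2 = 1) {a : ℕ → ℕ → ℂ} {c : ℂ} {B : ℕ → ℕ → ℝ}
    (hB : ∀ p q, ‖a p q - if p = q then c else 0‖ ≤ B p q) (n : ℕ) :
    ‖(r : ℂ) * ∑ p ∈ I, ∑ q ∈ I, starRingEnd ℂ (lam p) * lam q * a p q - a n n‖ ≤
      r * ∑ p ∈ I, ∑ q ∈ I, ‖lam p‖ * ‖lam q‖ * B p q + B n n := by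
  set b : ℕ → ℕ → ℂ := fun p q => a p q - if p = q then c else 0
  have hsum : ∑ p ∈ I, ∑ q ∈ I, starRingEnd ℂ (lam p) * lam q * a p q =
      ∑ p ∈ I, ∑ q ∈ I, starRingEnd ℂ (lam p) * lam q * b p q +
        ((∑ p ∈ I, ‖lam p‖ ^ 2 : ℝ) : ℂ) * c := by
    rw [← sum_conj_mul_ite_eq, ← Finset.sum_add_distrib]
    refine Finset.sum_congr rfl fun p _ => ?_
    rw [← Finset.sum_add_distrib]
    refine Finset.sum_congr rfl fun q _ => ?_
    simp only [b]; ring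
  have hcancel : (r : ℂ) * ∑ p ∈ I, ∑ q ∈ I, starRingEnd ℂ (lam p) * lam q * a p q - a n n =
      (r : ℂ) * ∑ p ∈ I, ∑ q ∈ I, starRingEnd ℂ (lam p) * lam q * b p q - b n n := by
    rw [hsum, mul_add, ← mul_assoc, ← Complex.ofReal_mul, hunit]
    simp only [b, if_true]; push_cast; ring
  have hquad : ‖∑ p ∈ I, ∑ q ∈ I, starRingEnd ℂ (lam p) * lam q * b p q‖ ≤
      ∑ p ∈ I, ∑ q ∈ I, ‖lam p‖ * ‖lam q‖ * B p q := by
    refine (norm_sum_le _ _).trans (Finset.sum_le_sum fun p _ => ?_)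
    refine (norm_sum_le _ _).trans (Finset.sum_le_sum fun q _ => ?_)
    rw [norm_mul, norm_mul, RCLike.norm_conj]
    exact mul_le_mul_of_nonneg_left (hB p q) (by positivity)
  rw [hcancel]
  refine (norm_sub_le _ _).trans (add_le_add ?_ (hB n n))
  rw [norm_mul, Complex.norm_real, Real.norm_of_nonneg hr]
  exact mul_le_mul_of_nonneg_left hquad hr

theorem finite_combination_state_finite_distance (θ : ℝ) (hθ : 0 < θ)
    (I : Finset ℕ) (lam : ℕ → ℂ)
    (hunit : 2 * π * θ * ∑ m ∈ I, ‖lam m‖ ^ 2 = 1) (n : ℕ) :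
    ∃ C : ℝ, ∀ a α β : ℕ → ℕ → ℂ,
      (∀ p q : ℕ, α (p + 1) q =
        (Real.sqrt (((q : ℝ) + 1) / θ) : ℂ) * a (p + 1) (q + 1) -
        (Real.sqrt (((p : ℝ) + 1) / θ) : ℂ) * a p q) →
      (∀ q : ℕ, α 0 q = (Real.sqrt (((q : ℝ) + 1) / θ) : ℂ) * a 0 (q + 1)) →
      (∀ p q : ℕ, β p (q + 1) =
        (Real.sqrt (((p : ℝ) + 1) / θ) : ℂ) * a (p + 1) (q + 1) -
        (Real.sqrt (((q : ℝ) + 1) / θ) : ℂ) * a p q) →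
      (∀ p : ℕ, β p 0 = (Real.sqrt (((p : ℝ) + 1) / θ) : ℂ) * a (p + 1) 0) →
      (∀ p q : ℕ, ‖α p q‖ ≤ 1 / Real.sqrt 2) →
      (∀ p q : ℕ, ‖β p q‖ ≤ 1 / Real.sqrt 2) →
      ‖(2 * π * θ : ℂ) * ∑ p ∈ I, ∑ q ∈ I,
          (starRingEnd ℂ) (lam p) * lam q * a p q - a n n‖ ≤ C := by
  refine ⟨2 * π * θ * ∑ p ∈ I, ∑ q ∈ I, ‖lam p‖ * ‖lam q‖ * (√θ * ((min p q : ℕ) + 1)) +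
    √θ * (n + 1), fun a α β hα hα0 hβ hβ0 hαb hβb => ?_⟩
  have hhalf : 1 / √2 ≤ (1 : ℝ) := by
    rw [div_le_one (by positivity)]
    exact Real.one_le_sqrt.2 one_le_two
  have hb := norm_sub_diag_le_of_derivatives hθ hα hα0 hβ hβ0
    (fun p q => (hαb p q).trans hhalf) (fun p q => (hβb p q).trans hhalf)
  have h := norm_vectorState_sub_le (by positivity) hunit hb n
  push_cast [min_self] at h ⊢
  exact h
end
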